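/- For every nonnegative integer n, sum_{j=0}^{2n} (-s)^j (2n choose j)_q = sum_{k=0}^n (n choose k)_{q^2} prod_{j=0}^{2k-1}(q^j - s) * ((q;q^2)_n / (q;q^2)_k), where (q;q^2)_n/(q;q^2)_k = prod_{i=k}^{n-1}(1-q^{2i+1}). -/

import Mathlib

/-!
The left side is `H_{2n}(-s)` for the Rogers–Szegő polynomial `H_m(t) = ∑_j t^j [m, j]_q`, and the
Pascal rule gives `H_{m+1}(-s) = H_m(-qs) - s H_m(-s)`. So it suffices that the operator
`f(s) ↦ f(qs) - s f(s)` maps the right side `E_n(s)` to an odd analogue `O_n(s)`, and `O_n(s)` to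
`E_{n+1}(s)`. With `P_m(s) = ∏_{j<m} (q^j - s)`, both steps rest on
`P_{m+1}(qs) - s P_{m+1}(s) = P_{m+2}(s) + q^m (1 - q^(m+1)) P_m(s)`: the second term is absorbed
by the Pascal rule for `[n+1, k]_{q²}` in the step `O_n → E_{n+1}`, and by the absorption identity
`(q^(2k) - q^(2n)) [n, k]_{q²} = q^(2k) (1 - q^(2k+2)) [n, k+1]_{q²}` in the step `E_n → O_n`.
-/

open Finset

/-- Gaussian (q-)binomial coefficient, defined over any commutative ring by the
Pascal-type recurrence `[n+1, k+1] = [n, k] + q^(k+1) * [n, k+1]`. -/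
def qbinom {R : Type*} [CommRing R] (q : R) : ℕ → ℕ → R
  | _, 0 => 1
  | 0, _ + 1 => 0
  | n + 1, k + 1 => qbinom q n k + q ^ (k + 1) * qbinom q n (k + 1)

section Qbinom

variable {R : Type*} [CommRing R] (q : R)

@[simp] lemma qbinom_zero_right (n : ℕ) : qbinom q n 0 = 1 := by cases n <;> rfl

lemma qbinom_succ_succ (n k : ℕ) :
    qbinom q (n + 1) (k + 1) = qbinom q n k + q ^ (k + 1) * qbinom q n (k + 1) := rfl

lemma qbinom_eq_zero_of_lt {n k : ℕ} (h : n < k) : qbinom q n k = 0 := by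
  induction n generalizing k with
  | zero => obtain ⟨k, rfl⟩ := Nat.exists_eq_add_one_of_ne_zero (by omega : k ≠ 0); rfl
  | succ n ih =>
    obtain ⟨k, rfl⟩ := Nat.exists_eq_add_one_of_ne_zero (by omega : k ≠ 0)
    rw [qbinom_succ_succ, ih (by omega), ih (by omega), mul_zero, add_zero]

/-- The mirrored Pascal rule `[n+1, k+1] = q^(n-k) [n, k] + [n, k+1]`, multiplied by `q^k`
so that it holds for all `k` without truncated subtraction. -/
lemma pow_mul_qbinom_succ_succ (n k : ℕ) :
    q ^ k * qbinom q (n + 1) (k + 1) = q ^ n * qbinom q n k + q ^ k * qbinom q n (k + 1) := by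
  induction n generalizing k with
  | zero => cases k <;> simp [qbinom]
  | succ n ih =>
    cases k with
    | zero =>
      have h := ih 0
      simp only [qbinom_succ_succ, qbinom_zero_right] at h ⊢
      linear_combination q * h
    | succ k =>
      rw [qbinom_succ_succ q (n + 1)]
      linear_combination q * ih k + q ^ (k + 2) * ih (k + 1) -
        q ^ (n + 1) * qbinom_succ_succ q n k - q ^ (k + 1) * qbinom_succ_succ q n (k + 1)

/-- Absorption `(1 - q^(k+1)) [n, k+1] = (1 - q^(n-k)) [n, k]`, multiplied by `q^k`. -/
lemma pow_sub_pow_mul_qbinom (n k : ℕ) :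
    (q ^ k - q ^ n) * qbinom q n k = q ^ k * (1 - q ^ (k + 1)) * qbinom q n (k + 1) := by
  linear_combination pow_mul_qbinom_succ_succ q n k - q ^ k * qbinom_succ_succ q n k

lemma sum_range_qbinom_succ_mul (n : ℕ) (f : ℕ → R) :
    ∑ k ∈ range (n + 2), qbinom q (n + 1) k * f k =
      ∑ k ∈ range (n + 1), (qbinom q n k * f (k + 1) + q ^ k * qbinom q n k * f k) := by
  have hshift : ∑ k ∈ range (n + 1), q ^ k * qbinom q n k * f k =
      ∑ k ∈ range (n + 1), q ^ (k + 1) * qbinom q n (k + 1) * f (k + 1) + f 0 := by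
    rw [sum_range_succ (fun k => q ^ (k + 1) * _ * _), qbinom_eq_zero_of_lt q (by omega), mul_zero,
      zero_mul, add_zero, sum_range_succ' (fun k => q ^ k * _ * _)]
    simp
  rw [sum_range_succ', sum_add_distrib, hshift]
  simp only [qbinom_succ_succ, qbinom_zero_right, add_mul, sum_add_distrib]
  ring

end Qbinom

section Products

variable {R : Type*} [CommRing R] (q s : R)

lemma prod_range_succ_pow_sub_mul (m : ℕ) :
    ∏ j ∈ range (m + 1), (q ^ j - q * s) = (1 - q * s) * q ^ m * ∏ j ∈ range m, (q ^ j - s) := by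
  have h : ∀ j ∈ range m, q ^ (j + 1) - q * s = q * (q ^ j - s) := fun j _ => by ring
  rw [prod_range_succ', prod_congr rfl h, prod_mul_distrib, prod_const, card_range, pow_zero]
  ring

lemma prod_range_pow_sub_mul_sub_mul_prod (m : ℕ) :
    ∏ j ∈ range (m + 1), (q ^ j - q * s) - s * ∏ j ∈ range (m + 1), (q ^ j - s) =
      ∏ j ∈ range (m + 2), (q ^ j - s) + q ^ m * (1 - q ^ (m + 1)) * ∏ j ∈ range m, (q ^ j - s) := by
  rw [prod_range_succ_pow_sub_mul, prod_range_succ _ (m + 1), prod_range_succ]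
  ring

lemma prod_Ico_succ_one_sub (f : ℕ → R) {k n : ℕ} (h : k ≤ n) :
    ∏ i ∈ Ico (k + 1) (n + 1), (1 - f i) =
      ∏ i ∈ Ico k n, (1 - f i) + (f k - f n) * ∏ i ∈ Ico (k + 1) n, (1 - f i) := by
  obtain rfl | hlt := h.eq_or_lt
  · simp
  · rw [prod_Ico_succ_top (by omega), prod_eq_prod_Ico_succ_bot hlt]
    ring

end Products

section RogersSzego

variable {R : Type*} [CommRing R] (q : R)

def rogersSzego (m : ℕ) (t : R) : R := ∑ j ∈ range (m + 1), t ^ j * qbinom q m j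

lemma rogersSzego_succ (m : ℕ) (t : R) :
    rogersSzego q (m + 1) t = rogersSzego q m (q * t) + t * rogersSzego q m t := by
  rw [rogersSzego, rogersSzego, rogersSzego, mul_sum, ← sum_add_distrib]
  simp_rw [mul_comm (t ^ _)]
  rw [sum_range_qbinom_succ_mul]
  refine sum_congr rfl fun k _ => ?_
  ring

def evenSum (s : R) (n : ℕ) : R :=
  ∑ k ∈ range (n + 1), qbinom (q ^ 2) n k * (∏ j ∈ range (2 * k), (q ^ j - s)) *
    ∏ i ∈ Ico k n, (1 - q ^ (2 * i + 1))

def oddSum (s : R) (n : ℕ) : R :=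
  ∑ k ∈ range (n + 1), qbinom (q ^ 2) n k * (∏ j ∈ range (2 * k + 1), (q ^ j - s)) *
    ∏ i ∈ Ico (k + 1) (n + 1), (1 - q ^ (2 * i + 1))

lemma evenSum_succ (s : R) (n : ℕ) :
    evenSum q s (n + 1) = oddSum q (q * s) n - s * oddSum q s n := by
  rw [evenSum, oddSum, oddSum, mul_sum, ← sum_sub_distrib]
  simp_rw [mul_assoc (qbinom _ _ _)]
  rw [sum_range_qbinom_succ_mul]
  refine sum_congr rfl fun k hk => ?_
  rw [prod_eq_prod_Ico_succ_bot (mem_range.mp hk) (fun i => 1 - q ^ (2 * i + 1)), ← pow_mul,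
    mul_add 2 k 1]
  linear_combination -qbinom (q ^ 2) n k * (∏ i ∈ Ico (k + 1) (n + 1), (1 - q ^ (2 * i + 1))) *
    prod_range_pow_sub_mul_sub_mul_prod q s (2 * k)

lemma oddSum_eq (s : R) (n : ℕ) :
    oddSum q s n = evenSum q (q * s) n - s * evenSum q s n := by
  -- `g k` is what the shift difference of `P_{2k}` leaves over beyond `P_{2k+1}`.
  set g : ℕ → R := fun k => qbinom (q ^ 2) n k * (∏ i ∈ Ico k n, (1 - q ^ (2 * i + 1))) *
    (∏ j ∈ range (2 * k), (q ^ j - q * s) - s * ∏ j ∈ range (2 * k), (q ^ j - s) -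
      ∏ j ∈ range (2 * k + 1), (q ^ j - s))
  have hg_zero : g 0 = 0 := by simp [g]
  have hg_succ (k : ℕ) : g (k + 1) = q ^ (2 * k + 1) * (1 - q ^ (2 * k + 2)) *
      qbinom (q ^ 2) n (k + 1) * (∏ j ∈ range (2 * k + 1), (q ^ j - s)) *
        ∏ i ∈ Ico (k + 1) n, (1 - q ^ (2 * i + 1)) := by
    simp only [g, mul_add 2 k 1]
    linear_combination qbinom (q ^ 2) n (k + 1) * (∏ i ∈ Ico (k + 1) n, (1 - q ^ (2 * i + 1))) *
      prod_range_pow_sub_mul_sub_mul_prod q s (2 * k + 1)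
  have hsum_g : ∑ k ∈ range (n + 1), g k = ∑ k ∈ range (n + 1), g (k + 1) := by
    rw [sum_range_succ' g, hg_zero, add_zero, sum_range_succ (fun k => g (k + 1)), hg_succ n,
      qbinom_eq_zero_of_lt (q ^ 2) (lt_add_one n)]
    simp
  calc oddSum q s n
      = ∑ k ∈ range (n + 1), (qbinom (q ^ 2) n k * (∏ j ∈ range (2 * k + 1), (q ^ j - s)) *
          ∏ i ∈ Ico k n, (1 - q ^ (2 * i + 1)) + g (k + 1)) := by
        refine sum_congr rfl fun k hk => ?_
        have hprod := prod_Ico_succ_one_sub (fun i => q ^ (2 * i + 1)) (mem_range_succ_iff.mp hk)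
        beta_reduce at hprod
        rw [hprod, hg_succ]
        linear_combination q * (∏ j ∈ range (2 * k + 1), (q ^ j - s)) *
          (∏ i ∈ Ico (k + 1) n, (1 - q ^ (2 * i + 1))) * pow_sub_pow_mul_qbinom (q ^ 2) n k
    _ = evenSum q (q * s) n - s * evenSum q s n := by
        rw [sum_add_distrib, ← hsum_g, ← sum_add_distrib, evenSum, evenSum, mul_sum,
          ← sum_sub_distrib]
        refine sum_congr rfl fun k _ => ?_
        ring

lemma rogersSzego_two_mul_neg (s : R) (n : ℕ) : rogersSzego q (2 * n) (-s) = evenSum q s n := by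
  induction n generalizing s with
  | zero => simp [rogersSzego, evenSum]
  | succ n ih =>
    have hodd (t : R) : rogersSzego q (2 * n + 1) (-t) = oddSum q t n := by
      rw [rogersSzego_succ, mul_neg, ih, ih, oddSum_eq]
      ring
    rw [mul_add_one, rogersSzego_succ, mul_neg, hodd, hodd, evenSum_succ]
    ring

end RogersSzego

theorem stmt14 {R : Type*} [CommRing R] (s q : R) (n : ℕ) :
    ∑ j ∈ Finset.range (2 * n + 1), (-s) ^ j * qbinom q (2 * n) j =
      ∑ k ∈ Finset.range (n + 1),
        qbinom (q ^ 2) n k * (∏ j ∈ Finset.range (2 * k), (q ^ j - s)) *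
          ∏ i ∈ Finset.Ico k n, (1 - q ^ (2 * i + 1)) :=
  rogersSzego_two_mul_neg q s n
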